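/- arXiv:2109.04068 — 2 statements merged into one kernel-verified Lean document; each statement's English description precedes it below -/
import Mathlib

section
/- Suppose δ_ℓ(n) = 0 for ℓ < N_1 and ℓ > N_2, and δ_ℓ(m) = 0 for ℓ < M_1 and ℓ > M_2. Then δ_ℓ(|n ± m|) = 0 for all ℓ < min{N_1, M_1} − 3 and for all ℓ > max{N_2, M_2} + 2. -/
/-- A valid Zeckendorf representation of `n`: digits in `{0,1}`, digits below index 2 vanish,
no two consecutive ones, finite support, and the weighted sum equals `n`. -/
def IsZeckRep (n : ℕ) (δ : ℕ → ℕ) : Prop :=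
  (∀ k, δ k ≤ 1) ∧ (∀ k < 2, δ k = 0) ∧ (∀ k, δ (k + 1) = 1 → δ k = 0) ∧
    ∃ L, (∀ k, L < k → δ k = 0) ∧ n = ∑ k ∈ Finset.range (L + 1), δ k * Nat.fib k

-- The canonical Zeckendorf digit function.
open Classical in
noncomputable def zeckDigit (n k : ℕ) : ℕ :=
  if h : ∃ δ : ℕ → ℕ, IsZeckRep n δ then h.choose k else 0

noncomputable def phi : ℝ := (1 + Real.sqrt 5) / 2

/-!
Write `x = ∑ δₖ Fₖ` in Zeckendorf form. Since `F_{k+1} - φ Fₖ = ψᵏ` with `ψ = -φ⁻¹`, the number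
`xφ` differs from the integer `∑ δₖ F_{k+1}` by `∑ δₖ ψᵏ`. For 0/1 digits with no two adjacent
ones that vanish below `t`, this error has absolute value at most `φ⁻¹ ^ (t - 1)`, and at least
`φ⁻¹ ^ (t + 1)` when `δₜ = 1`. So the low digits of `x` vanish exactly to the extent that `xφ` is
close to an integer; that distance is subadditive, and the one digit lost between the two bounds
plus the factor `2 < φ²` account for the three digits lost by `n ± m`. For the high digits,
`F_ℓ ≤ x < F_{T+1}` whenever `δ_ℓ = 1` and `T` bounds the digits of `x`, and
`n + m < 2 F_{K+1} ≤ F_{K+3}`.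
-/

open Finset Real
open scoped goldenRatio

section PowerSums

variable {R : Type*} [CommSemiring R]

theorem sum_range_succ_mul_pow (a : ℕ → R) (x : R) (d : ℕ) :
    ∑ k ∈ range (d + 1), a k * x ^ k = a 0 + x * ∑ k ∈ range d, a (k + 1) * x ^ k := by
  rw [sum_range_succ', add_comm, mul_sum, pow_zero, mul_one]
  exact congrArg _ (sum_congr rfl fun k _ => by ring)

theorem sum_range_add_mul_pow_of_eq_zero {a : ℕ → R} {t : ℕ} (ha : ∀ k < t, a k = 0)
    (x : R) (d : ℕ) :
    ∑ k ∈ range (t + d), a k * x ^ k = x ^ t * ∑ k ∈ range d, a (t + k) * x ^ k := by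
  rw [sum_range_add, sum_eq_zero fun k hk => by rw [ha k (mem_range.1 hk), zero_mul], zero_add,
    mul_sum]
  exact sum_congr rfl fun k _ => by ring

end PowerSums

theorem inv_goldenRatio_add_pow_three_lt_one : φ⁻¹ + φ⁻¹ ^ 3 < 1 := by
  have hψ : -2 / 3 < ψ := by
    rw [goldenConj]; nlinarith [Real.sq_sqrt (show (0 : ℝ) ≤ 5 by norm_num), Real.sqrt_nonneg 5]
  have : φ⁻¹ + φ⁻¹ ^ 3 = -3 * ψ - 1 := by
    rw [inv_goldenRatio]; linear_combination (-(ψ + 1)) * goldenConj_sq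
  linarith

theorem two_mul_inv_goldenRatio_sq_lt_one : 2 * φ⁻¹ ^ 2 < 1 := by
  have hψ : ψ < -1 / 2 := by
    rw [goldenConj]; nlinarith [Real.sq_sqrt (show (0 : ℝ) ≤ 5 by norm_num), Real.sqrt_nonneg 5]
  rw [inv_goldenRatio, neg_sq, goldenConj_sq]
  linarith

-- The extreme digit patterns, all odd or all even indices, give `ψ + ψ³ + ⋯ = -1` and
-- `1 + ψ² + ⋯ = φ`.
theorem sum_digit_mul_goldenConj_pow_mem_Icc :
    ∀ (d : ℕ) {δ : ℕ → ℕ}, (∀ k, δ k + δ (k + 1) ≤ 1) →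
      ∑ k ∈ range d, (δ k : ℝ) * ψ ^ k ∈ Set.Icc (-1) φ
  | 0, _, _ => by simpa using goldenRatio_pos.le
  | d + 1, δ, hδ => by
    rw [sum_range_succ_mul_pow]
    obtain h0 | h0 : δ 0 = 0 ∨ δ 0 = 1 := by have := hδ 0; omega
    · obtain ⟨hlo, hhi⟩ := sum_digit_mul_goldenConj_pow_mem_Icc d fun k => hδ (k + 1)
      rw [h0, Nat.cast_zero, zero_add]
      constructor <;> nlinarith [goldenConj_neg, goldenRatio_mul_goldenConj, one_sub_goldenConj]
    · have h1 : δ 1 = 0 := by have : δ 0 + δ 1 ≤ 1 := hδ 0; omega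
      cases d with
      | zero => simpa [h0] using one_lt_goldenRatio.le
      | succ d =>
        obtain ⟨hlo, hhi⟩ := sum_digit_mul_goldenConj_pow_mem_Icc d fun k => hδ (k + 2)
        rw [sum_range_succ_mul_pow, h0, h1, Nat.cast_zero, zero_add, Nat.cast_one]
        constructor <;> nlinarith [goldenConj_neg, goldenConj_sq, goldenRatio_mul_goldenConj]

theorem inv_goldenRatio_le_sum_digit_mul_goldenConj_pow {δ : ℕ → ℕ}
    (hδ : ∀ k, δ k + δ (k + 1) ≤ 1) (h0 : δ 0 = 1) (d : ℕ) :
    φ⁻¹ ≤ ∑ k ∈ range (d + 1), (δ k : ℝ) * ψ ^ k := by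
  rw [inv_goldenRatio]
  cases d with
  | zero => simp [h0]; linarith [neg_one_lt_goldenConj]
  | succ d =>
    have h1 : δ 1 = 0 := by have : δ 0 + δ 1 ≤ 1 := hδ 0; omega
    obtain ⟨hlo, -⟩ := sum_digit_mul_goldenConj_pow_mem_Icc d fun k => hδ (k + 2)
    rw [sum_range_succ_mul_pow, sum_range_succ_mul_pow, h0, h1, Nat.cast_zero, zero_add,
      Nat.cast_one]
    nlinarith [goldenConj_sq]

theorem sum_digit_mul_fib_lt {δ : ℕ → ℕ} (hδ : ∀ k, δ k + δ (k + 1) ≤ 1) (h1 : δ 1 = 0) :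
    ∀ d, ∑ k ∈ range (d + 1), δ k * Nat.fib k < Nat.fib (d + 1)
  | 0 => by simp
  | 1 => by simp [sum_range_succ, h1]
  | d + 2 => by
    have ih₁ := sum_digit_mul_fib_lt hδ h1 d
    have ih₂ : ∑ k ∈ range (d + 2), δ k * Nat.fib k < Nat.fib (d + 2) :=
      sum_digit_mul_fib_lt hδ h1 (d + 1)
    have hfib : Nat.fib (d + 3) = Nat.fib (d + 1) + Nat.fib (d + 2) := Nat.fib_add_two
    have hmono : Nat.fib (d + 2) ≤ Nat.fib (d + 3) := Nat.fib_mono (by omega)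
    have hadj : δ (d + 1) + δ (d + 2) ≤ 1 := hδ (d + 1)
    show ∑ k ∈ range (d + 3), δ k * Nat.fib k < Nat.fib (d + 3)
    rw [sum_range_succ]
    obtain h | h : δ (d + 2) = 0 ∨ δ (d + 2) = 1 := by omega
    · rw [h, zero_mul, add_zero]
      omega
    · have : δ (d + 1) = 0 := by omega
      rw [sum_range_succ, h, this, zero_mul, add_zero, one_mul]
      omega

namespace IsZeckRep

variable {x : ℕ} {δ : ℕ → ℕ}

theorem add_succ_le_one (h : IsZeckRep x δ) (k : ℕ) : δ k + δ (k + 1) ≤ 1 := by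
  have := h.1 k
  have := h.1 (k + 1)
  have := h.2.2.1 k
  omega

theorem eq_sum_range {T : ℕ} (h : IsZeckRep x δ) (hT : ∀ k, T < k → δ k = 0) :
    x = ∑ k ∈ range (T + 1), δ k * Nat.fib k := by
  obtain ⟨-, -, -, L, hL, hx⟩ := h
  have vanish {N : ℕ} (hN : ∀ k, N < k → δ k = 0) : ∀ k ≥ N + 1, δ k * Nat.fib k = 0 :=
    fun k hk => by rw [hN k hk, zero_mul]
  rw [hx, ← eventually_constant_sum (vanish hL) (by omega : L + 1 ≤ max L T + 1),
    eventually_constant_sum (vanish hT) (by omega : T + 1 ≤ max L T + 1)]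

theorem exists_int_sub_eq {T : ℕ} (h : IsZeckRep x δ) (hT : ∀ k, T < k → δ k = 0) :
    ∃ I : ℤ, (I : ℝ) - x * φ = ∑ k ∈ range (T + 1), (δ k : ℝ) * ψ ^ k := by
  refine ⟨∑ k ∈ range (T + 1), δ k * Nat.fib (k + 1), ?_⟩
  rw [h.eq_sum_range hT]
  push_cast
  rw [sum_mul, ← sum_sub_distrib]
  exact sum_congr rfl fun k _ => by rw [← fib_succ_sub_goldenRatio_mul_fib]; ring

theorem exists_int_abs_sub_bounds {t : ℕ} (h : IsZeckRep x δ) (ht : ∀ k < t, δ k = 0) :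
    ∃ I : ℤ, |x * φ - I| ≤ φ * φ⁻¹ ^ t ∧ (δ t = 1 → φ⁻¹ ^ (t + 1) ≤ |x * φ - I|) := by
  obtain ⟨L, hL, -⟩ := h.2.2.2
  obtain ⟨I, hI⟩ := h.exists_int_sub_eq (T := t + L) fun k hk => hL k (by omega)
  have hδ' : ∀ k, δ (t + k) + δ (t + k + 1) ≤ 1 := fun k => h.add_succ_le_one (t + k)
  set S := ∑ k ∈ range (L + 1), (δ (t + k) : ℝ) * ψ ^ k
  have hdist : |x * φ - I| = φ⁻¹ ^ t * |S| := by
    rw [abs_sub_comm, hI, add_assoc, sum_range_add_mul_pow_of_eq_zero (by exact_mod_cast ht),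
      abs_mul, abs_pow, inv_goldenRatio, abs_of_neg goldenConj_neg]
  obtain ⟨hlo, hhi⟩ := sum_digit_mul_goldenConj_pow_mem_Icc (L + 1) hδ'
  refine ⟨I, ?_, fun h1 => ?_⟩
  · rw [hdist, mul_comm]
    gcongr
    exact abs_le.2 ⟨by linarith [one_lt_goldenRatio], hhi⟩
  · have hS := inv_goldenRatio_le_sum_digit_mul_goldenConj_pow hδ' (by simpa using h1) L
    rw [hdist, pow_succ]
    gcongr
    exact hS.trans (le_abs_self S)

theorem fib_le {k : ℕ} (h : IsZeckRep x δ) (hk : δ k = 1) : Nat.fib k ≤ x := by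
  obtain ⟨L, hL, -⟩ := h.2.2.2
  rw [h.eq_sum_range (T := L + k) fun j hj => hL j (by omega)]
  calc Nat.fib k = δ k * Nat.fib k := by rw [hk, one_mul]
    _ ≤ _ := single_le_sum (f := fun j => δ j * Nat.fib j) (fun j _ => Nat.zero_le _)
      (mem_range.2 (by omega))

theorem lt_fib {T : ℕ} (h : IsZeckRep x δ) (hT : ∀ k, T < k → δ k = 0) :
    x < Nat.fib (T + 1) := by
  rw [h.eq_sum_range hT]
  exact sum_digit_mul_fib_lt h.add_succ_le_one (h.2.1 1 one_lt_two) T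

end IsZeckRep

theorem isZeckRep_indicator_zeckendorf (n : ℕ) :
    IsZeckRep n fun k => if k ∈ n.zeckendorf.toFinset then 1 else 0 := by
  set l := n.zeckendorf
  have hpw : (l ++ [0]).Pairwise fun a b => b + 2 ≤ a :=
    haveI : Trans (fun a b : ℕ => b + 2 ≤ a) (fun a b => b + 2 ≤ a) (fun a b => b + 2 ≤ a) :=
      ⟨fun h₁ h₂ => by omega⟩
    (Nat.isZeckendorfRep_zeckendorf n).pairwise
  obtain ⟨hl, -, hl0⟩ := List.pairwise_append.1 hpw
  have hsep : ∀ a ∈ l, ∀ b ∈ l, a ≠ b + 1 :=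
    List.Pairwise.forall_of_forall_of_flip (R := fun a b => a ≠ b + 1) (fun _ _ => by omega)
      (hl.imp fun h => by omega) (hl.imp fun h => by simp only [flip]; omega)
  refine ⟨fun k => by dsimp only; split_ifs <;> omega, fun k hk => if_neg fun hmem => ?_,
    fun k hk => if_neg fun hmem => ?_, l.toFinset.sup id, fun k hk => if_neg fun hmem => ?_, ?_⟩
  · have := hl0 k (List.mem_toFinset.1 hmem) 0 (by simp)
    omega
  · have hk1 : k + 1 ∈ l := by by_contra h; simp [h] at hk
    exact hsep _ hk1 _ (List.mem_toFinset.1 hmem) rfl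
  · exact absurd (le_sup (f := id) hmem) (not_le.2 hk)
  · simp only [ite_mul, one_mul, zero_mul]
    have hsub : l.toFinset ⊆ range (l.toFinset.sup id + 1) :=
      fun k hk => mem_range.2 (Nat.lt_succ_of_le (le_sup (f := id) hk))
    rw [sum_ite_mem, inter_eq_right.2 hsub, List.sum_toFinset _ (hl.imp fun h => by omega), Nat.sum_zeckendorf_fib]

theorem zeckDigit_isZeckRep (n : ℕ) : IsZeckRep n (zeckDigit n) := by
  have hex : ∃ δ, IsZeckRep n δ := ⟨_, isZeckRep_indicator_zeckendorf n⟩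
  have : zeckDigit n = hex.choose := funext fun k => by rw [zeckDigit, dif_pos hex]
  exact this ▸ hex.choose_spec

theorem zeckDigit_eq_zero_of_lt_fib {x k : ℕ} (hx : x < Nat.fib k) : zeckDigit x k = 0 := by
  have hrep := zeckDigit_isZeckRep x
  by_contra h
  have := hrep.fib_le (k := k) (by have := hrep.1 k; omega)
  omega

theorem exists_int_abs_mul_goldenRatio_sub_le {x t : ℕ} (ht : ∀ k < t, zeckDigit x k = 0) :
    ∃ I : ℤ, |x * φ - I| ≤ φ * φ⁻¹ ^ t :=
  ((zeckDigit_isZeckRep x).exists_int_abs_sub_bounds ht).imp fun _ h => h.1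

-- If `t < L` is the lowest nonzero digit, `xφ` lies within `φ⁻¹ ^ (t - 1) ≤ φ⁻¹` of an
-- integer `I` but not within `φ⁻¹ ^ (t + 1)`; so `M ≠ I`, and `M` is too close to `I`.
theorem zeckDigit_eq_zero_of_abs_mul_goldenRatio_sub_lt {x L : ℕ} {M : ℤ}
    (hM : |x * φ - M| < φ⁻¹ ^ L) : ∀ k < L, zeckDigit x k = 0 := by
  classical
  by_contra! hex
  have hrep := zeckDigit_isZeckRep x
  obtain ⟨htL, htne⟩ := Nat.find_spec hex
  set t := Nat.find hex
  have hbelow : ∀ k < t, zeckDigit x k = 0 := fun k hk => by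
    by_contra hk'
    exact Nat.find_min hex hk ⟨hk.trans htL, hk'⟩
  have ht1 : zeckDigit x t = 1 := by have := hrep.1 t; omega
  have ht2 : 2 ≤ t := by by_contra h; exact htne (hrep.2.1 t (by omega))
  obtain ⟨I, hup, hlow⟩ := hrep.exists_int_abs_sub_bounds hbelow
  have hr := inv_pos.2 goldenRatio_pos
  have hr1 := inv_lt_one_of_one_lt₀ one_lt_goldenRatio
  have hLt : φ⁻¹ ^ L ≤ φ⁻¹ ^ (t + 1) := pow_le_pow_of_le_one hr.le hr1.le htL
  have hMI : M ≠ I := by rintro rfl; linarith [hlow ht1]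
  have h1 : (1 : ℝ) ≤ |(I : ℝ) - M| := by
    exact_mod_cast Int.one_le_abs (sub_ne_zero.2 hMI.symm)
  have hsmall : φ * φ⁻¹ ^ t + φ⁻¹ ^ L ≤ φ⁻¹ + φ⁻¹ ^ 3 := by
    have h2 : φ * φ⁻¹ ^ t ≤ φ * φ⁻¹ ^ 2 :=
      mul_le_mul_of_nonneg_left (pow_le_pow_of_le_one hr.le hr1.le ht2) goldenRatio_pos.le
    have h3 : φ⁻¹ ^ L ≤ φ⁻¹ ^ 3 := pow_le_pow_of_le_one hr.le hr1.le (by omega)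
    rw [pow_two, ← mul_assoc, mul_inv_cancel₀ goldenRatio_ne_zero, one_mul] at h2
    linarith
  have htri := abs_sub_le (I : ℝ) (x * φ) M
  rw [abs_sub_comm (I : ℝ) (x * φ)] at htri
  linarith [inv_goldenRatio_add_pow_three_lt_one]

theorem abs_abs_sub_mul_sub_abs_sub_le {a b A B c : ℝ} (hc : 0 ≤ c) :
    |(|a - b| * c - |A - B|)| ≤ |a * c - A| + |b * c - B| :=
  calc |(|a - b| * c - |A - B|)| = |(|(a - b) * c| - |A - B|)| := by
        rw [abs_mul, abs_of_nonneg hc]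
    _ ≤ |(a - b) * c - (A - B)| := abs_abs_sub_abs_le_abs_sub _ _
    _ = |(a * c - A) - (b * c - B)| := by ring_nf
    _ ≤ |a * c - A| + |b * c - B| := abs_sub _ _

theorem zeckDigit_add_and_natAbs_sub_eq_zero_of_lt {n m L : ℕ}
    (hn : ∀ k < L + 3, zeckDigit n k = 0) (hm : ∀ k < L + 3, zeckDigit m k = 0) :
    ∀ k < L, zeckDigit (n + m) k = 0 ∧ zeckDigit ((n : ℤ) - m).natAbs k = 0 := by
  obtain ⟨A, hA⟩ := exists_int_abs_mul_goldenRatio_sub_le hn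
  obtain ⟨B, hB⟩ := exists_int_abs_mul_goldenRatio_sub_le hm
  have hε : 2 * (φ * φ⁻¹ ^ (L + 3)) < φ⁻¹ ^ L := by
    have hφ : φ * φ⁻¹ = 1 := mul_inv_cancel₀ goldenRatio_ne_zero
    have : 2 * (φ * φ⁻¹ ^ (L + 3)) = 2 * φ⁻¹ ^ 2 * φ⁻¹ ^ L := by
      linear_combination (2 * φ⁻¹ ^ (L + 2)) * hφ
    rw [this]
    exact mul_lt_of_lt_one_left (pow_pos (inv_pos.2 goldenRatio_pos) L)
      two_mul_inv_goldenRatio_sq_lt_one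
  intro k hk
  constructor
  · refine zeckDigit_eq_zero_of_abs_mul_goldenRatio_sub_lt (M := A + B) ?_ k hk
    calc |((n + m : ℕ) : ℝ) * φ - ((A + B : ℤ) : ℝ)| = |(n * φ - A) + (m * φ - B)| := by
          push_cast; ring_nf
      _ ≤ |n * φ - A| + |m * φ - B| := abs_add_le _ _
      _ < φ⁻¹ ^ L := by linarith
  · refine zeckDigit_eq_zero_of_abs_mul_goldenRatio_sub_lt (M := |A - B|) ?_ k hk
    calc |((((n : ℤ) - m).natAbs : ℕ) : ℝ) * φ - ((|A - B| : ℤ) : ℝ)|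
          = |(|(n : ℝ) - m| * φ - |(A : ℝ) - B|)| := by rw [Nat.cast_natAbs]; push_cast; rfl
      _ ≤ |n * φ - A| + |m * φ - B| := abs_abs_sub_mul_sub_abs_sub_le goldenRatio_pos.le
      _ < φ⁻¹ ^ L := by linarith

theorem zeckDigit_add_and_natAbs_sub_eq_zero_of_gt {n m T : ℕ}
    (hn : ∀ k, T < k → zeckDigit n k = 0) (hm : ∀ k, T < k → zeckDigit m k = 0) :
    ∀ k, T + 2 < k → zeckDigit (n + m) k = 0 ∧ zeckDigit ((n : ℤ) - m).natAbs k = 0 := by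
  have hnT := (zeckDigit_isZeckRep n).lt_fib hn
  have hmT := (zeckDigit_isZeckRep m).lt_fib hm
  have hfib : Nat.fib (T + 3) = Nat.fib (T + 1) + Nat.fib (T + 2) := Nat.fib_add_two
  have hmono : Nat.fib (T + 1) ≤ Nat.fib (T + 2) := Nat.fib_mono (by omega)
  intro k hk
  have hk' : Nat.fib (T + 3) ≤ Nat.fib k := Nat.fib_mono (by omega)
  exact ⟨zeckDigit_eq_zero_of_lt_fib (by omega), zeckDigit_eq_zero_of_lt_fib (by omega)⟩

/-- If the Zeckendorf digits of `n` are supported in `[N₁, N₂]` and those of `m` in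
`[M₁, M₂]`, then the Zeckendorf digits of `n + m` and of `|n - m|` vanish at all indices
`ℓ < min N₁ M₁ - 3` and all indices `ℓ > max N₂ M₂ + 2`. -/
theorem zeck_digits_add_and_sub (n m N₁ N₂ M₁ M₂ : ℕ)
    (hn : ∀ ℓ, (ℓ < N₁ ∨ N₂ < ℓ) → zeckDigit n ℓ = 0)
    (hm : ∀ ℓ, (ℓ < M₁ ∨ M₂ < ℓ) → zeckDigit m ℓ = 0) :
    ∀ ℓ, (ℓ + 3 < min N₁ M₁ ∨ max N₂ M₂ + 2 < ℓ) →
      zeckDigit (n + m) ℓ = 0 ∧ zeckDigit ((n : ℤ) - (m : ℤ)).natAbs ℓ = 0 := by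
  rintro ℓ (hlow | hhigh)
  · exact zeckDigit_add_and_natAbs_sub_eq_zero_of_lt (L := ℓ + 1)
      (fun k hk => hn k (.inl (by omega))) (fun k hk => hm k (.inl (by omega))) ℓ (by omega)
  · exact zeckDigit_add_and_natAbs_sub_eq_zero_of_gt (T := max N₂ M₂)
      (fun k hk => hn k (.inr (by omega))) (fun k hk => hm k (.inr (by omega))) ℓ hhigh
end

section
/- For the Markov chain probability generating function: E[v^{S_n}] = a(v)·λ₁(v)^n + b(v)·λ₂(v)^n where λ₁(v) = (1 + √(1+4v))/(2φ), λ₂(v) = (1 − √(1+4v))/(2φ), a(v) = ((φ²+v)/(φ²+1) − λ₂(v))/(λ₁(v) − λ₂(v)), and b(v) = ((φ²+v)/(φ²+1) − λ₁(v))/(λ₂(v) − λ₁(v)). -/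
/-- Initial (stationary) distribution of the Markov chain `(Z k)` on `{0,1}`. -/
noncomputable def zInit : Fin 2 → ℝ := fun b =>
  if b = 0 then phi ^ 2 / (phi ^ 2 + 1) else 1 / (phi ^ 2 + 1)

/-- Transition probabilities of the Markov chain `(Z k)` on `{0,1}`. -/
noncomputable def zTrans : Fin 2 → Fin 2 → ℝ := fun a b =>
  if a = 0 then (if b = 0 then 1 / phi else 1 / phi ^ 2)
  else (if b = 0 then 1 else 0)

/-- The probability of the path `(Z 0, …, Z n) = (z 0, …, z n)` of the Markov chain. -/
noncomputable def pathProb (n : ℕ) (z : Fin (n + 1) → Fin 2) : ℝ :=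
  zInit (z 0) * ∏ i : Fin n, zTrans (z i.castSucc) (z i.succ)

/-- The value `S n = Z 1 + ⋯ + Z n` along a path. -/
def pathSum (n : ℕ) (z : Fin (n + 1) → Fin 2) : ℕ := ∑ i : Fin n, (z i.succ : ℕ)

noncomputable def lam1 (v : ℝ) : ℝ := (1 + Real.sqrt (1 + 4 * v)) / (2 * phi)

noncomputable def lam2 (v : ℝ) : ℝ := (1 - Real.sqrt (1 + 4 * v)) / (2 * phi)

noncomputable def aCoef (v : ℝ) : ℝ :=
  ((phi ^ 2 + v) / (phi ^ 2 + 1) - lam2 v) / (lam1 v - lam2 v)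

noncomputable def bCoef (v : ℝ) : ℝ :=
  ((phi ^ 2 + v) / (phi ^ 2 + 1) - lam1 v) / (lam2 v - lam1 v)

/-!
Summing over paths, `E[v^{S_n}] = ∑_b (π ᵥ* M_v^n) b` for the initial law `π` and the tilted
transition matrix `M_v = (P a b * v^b) = ((1/φ, v/φ²), (1, 0))`. By Cayley–Hamilton
`M_v² = φ⁻¹ M_v + (v/φ²) I`, so this sequence satisfies a two-term linear recurrence whose
characteristic roots are `λ₁(v), λ₂(v)`; `a(v), b(v)` are fitted to its values `1` and
`(φ² + v)/(φ² + 1)` at `n = 0, 1`.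
-/

open Finset Matrix

section PathSum

variable {R α : Type*} [CommSemiring R] [Fintype α] [DecidableEq α]

theorem sum_paths_eq_sum_vecMul_pow (W : Matrix α α R) (u : α → R) (n : ℕ) :
    ∑ z : Fin (n + 1) → α, u (z 0) * ∏ i : Fin n, W (z i.castSucc) (z i.succ) =
      ∑ b, (u ᵥ* W ^ n) b := by
  induction n generalizing u with
  | zero =>
    rw [← (Equiv.funUnique (Fin 1) α).symm.sum_comp]
    simp
  | succ n ih =>
    rw [← (Fin.consEquiv fun _ : Fin (n + 2) => α).sum_comp, Fintype.sum_prod_type, sum_comm,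
      pow_succ', ← vecMul_vecMul, ← ih]
    refine sum_congr rfl fun z _ => ?_
    simp only [vecMul, dotProduct, sum_mul, Fin.consEquiv_apply, Fin.prod_univ_succ,
      Fin.cons_zero, Fin.cons_succ, Fin.castSucc_zero, ← Fin.succ_castSucc]
    refine sum_congr rfl fun a _ => ?_
    ring

theorem sum_vecMul_pow_add_two {M : Matrix α α R} {p q : R} (h : M ^ 2 = p • M + q • 1)
    (u : α → R) (n : ℕ) :
    ∑ b, (u ᵥ* M ^ (n + 2)) b = p * ∑ b, (u ᵥ* M ^ (n + 1)) b + q * ∑ b, (u ᵥ* M ^ n) b := by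
  rw [pow_add, h, mul_add, mul_smul_comm, mul_smul_comm, mul_one, ← pow_succ, vecMul_add,
    vecMul_smul, vecMul_smul]
  simp only [Pi.add_apply, Pi.smul_apply, smul_eq_mul, sum_add_distrib, mul_sum]

end PathSum

theorem sq_fin_two_of_lower_right_eq_zero {R : Type*} [CommRing R] (a b c : R) :
    !![a, b; c, 0] ^ 2 = a • !![a, b; c, 0] + (b * c) • 1 := by
  ext i j
  fin_cases i <;> fin_cases j <;> simp [sq] <;> ring

theorem eq_mul_pow_add_mul_pow_of_recurrence {R : Type*} [CommRing R] {s : ℕ → R}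
    {p q l₁ l₂ a b : R}
    (hs : ∀ n, s (n + 2) = p * s (n + 1) + q * s n)
    (hl₁ : l₁ ^ 2 = p * l₁ + q) (hl₂ : l₂ ^ 2 = p * l₂ + q)
    (h0 : s 0 = a + b) (h1 : s 1 = a * l₁ + b * l₂) (n : ℕ) :
    s n = a * l₁ ^ n + b * l₂ ^ n := by
  induction n using Nat.twoStepInduction with
  | zero => simpa using h0
  | one => simpa using h1
  | more n ih₀ ih₁ =>
    rw [hs, ih₀, ih₁]
    linear_combination -(a * l₁ ^ n * hl₁ + b * l₂ ^ n * hl₂)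

open Real

theorem phi_pos : 0 < phi := goldenRatio_pos

theorem phi_sq : phi ^ 2 = phi + 1 := goldenRatio_sq

noncomputable def tiltedTrans (v : ℝ) : Matrix (Fin 2) (Fin 2) ℝ :=
  of fun a b => zTrans a b * v ^ (b : ℕ)

theorem pathProb_mul_pow_pathSum (n : ℕ) (z : Fin (n + 1) → Fin 2) (v : ℝ) :
    pathProb n z * v ^ pathSum n z =
      zInit (z 0) * ∏ i : Fin n, tiltedTrans v (z i.castSucc) (z i.succ) := by
  rw [pathProb, pathSum, ← prod_pow_eq_pow_sum, mul_assoc, ← prod_mul_distrib]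
  rfl

theorem tiltedTrans_eq (v : ℝ) : tiltedTrans v = !![phi⁻¹, v / phi ^ 2; 1, 0] := by
  ext a b
  fin_cases a <;> fin_cases b <;> simp [tiltedTrans, zTrans, div_eq_mul_inv, mul_comm]

theorem tiltedTrans_sq (v : ℝ) :
    tiltedTrans v ^ 2 = phi⁻¹ • tiltedTrans v + (v / phi ^ 2) • 1 := by
  rw [tiltedTrans_eq, sq_fin_two_of_lower_right_eq_zero, mul_one]

theorem sum_zInit : ∑ b, zInit b = 1 := by
  have hφ : phi ^ 2 + 1 ≠ 0 := by positivity
  simp only [Fin.sum_univ_two, zInit, ↓reduceIte, one_ne_zero]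
  field_simp

theorem sum_zInit_vecMul_tiltedTrans (v : ℝ) :
    ∑ b, (zInit ᵥ* tiltedTrans v) b = (phi ^ 2 + v) / (phi ^ 2 + 1) := by
  have hφ : phi ^ 2 + 1 ≠ 0 := by positivity
  rw [tiltedTrans_eq]
  simp only [vecMul, dotProduct, zInit, of_apply, cons_val', cons_val_fin_one, Fin.sum_univ_two,
    ↓reduceIte, cons_val_zero, one_ne_zero, cons_val_one, mul_one, mul_zero, add_zero]
  field_simp [phi_pos.ne']
  linear_combination -phi_sq

theorem sq_one_add_div_two_mul_phi {v s : ℝ} (hs : s ^ 2 = 1 + 4 * v) :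
    ((1 + s) / (2 * phi)) ^ 2 = phi⁻¹ * ((1 + s) / (2 * phi)) + v / phi ^ 2 := by
  field_simp [phi_pos.ne']
  linear_combination hs

theorem lam1_sq {v : ℝ} (hv : 0 ≤ 1 + 4 * v) : lam1 v ^ 2 = phi⁻¹ * lam1 v + v / phi ^ 2 :=
  sq_one_add_div_two_mul_phi (sq_sqrt hv)

theorem lam2_sq {v : ℝ} (hv : 0 ≤ 1 + 4 * v) : lam2 v ^ 2 = phi⁻¹ * lam2 v + v / phi ^ 2 := by
  rw [lam2, sub_eq_add_neg]
  exact sq_one_add_div_two_mul_phi (by rw [neg_sq, sq_sqrt hv])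

theorem lam1_ne_lam2 {v : ℝ} (hv : 0 < 1 + 4 * v) : lam1 v ≠ lam2 v := by
  rw [lam1, lam2, Ne, div_left_inj' (by linarith [phi_pos])]
  linarith [sqrt_pos.2 hv]

theorem aCoef_add_bCoef {v : ℝ} (h : lam1 v ≠ lam2 v) : aCoef v + bCoef v = 1 := by
  have h₁₂ : lam1 v - lam2 v ≠ 0 := sub_ne_zero.2 h
  have h₂₁ : lam2 v - lam1 v ≠ 0 := sub_ne_zero.2 h.symm
  rw [aCoef, bCoef]
  field_simp
  ring

theorem aCoef_mul_add_bCoef_mul {v : ℝ} (h : lam1 v ≠ lam2 v) :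
    aCoef v * lam1 v + bCoef v * lam2 v = (phi ^ 2 + v) / (phi ^ 2 + 1) := by
  have h₁₂ : lam1 v - lam2 v ≠ 0 := sub_ne_zero.2 h
  have h₂₁ : lam2 v - lam1 v ≠ 0 := sub_ne_zero.2 h.symm
  rw [aCoef, bCoef]
  field_simp
  ring

theorem markov_pgf_general (n : ℕ) (v : ℝ) (hv : 0 < v) :
    (∑ z : Fin (n + 1) → Fin 2, pathProb n z * v ^ pathSum n z) =
      aCoef v * lam1 v ^ n + bCoef v * lam2 v ^ n := by
  have hv' : 0 < 1 + 4 * v := by linarith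
  calc ∑ z : Fin (n + 1) → Fin 2, pathProb n z * v ^ pathSum n z
      = ∑ z : Fin (n + 1) → Fin 2,
          zInit (z 0) * ∏ i : Fin n, tiltedTrans v (z i.castSucc) (z i.succ) :=
        sum_congr rfl fun z _ => pathProb_mul_pow_pathSum n z v
    _ = ∑ b, (zInit ᵥ* tiltedTrans v ^ n) b := sum_paths_eq_sum_vecMul_pow _ _ _
    _ = aCoef v * lam1 v ^ n + bCoef v * lam2 v ^ n :=
        eq_mul_pow_add_mul_pow_of_recurrence
          (s := fun k => ∑ b, (zInit ᵥ* tiltedTrans v ^ k) b)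
          (sum_vecMul_pow_add_two (tiltedTrans_sq v) zInit)
          (lam1_sq hv'.le) (lam2_sq hv'.le)
          (by rw [pow_zero, vecMul_one, sum_zInit, aCoef_add_bCoef (lam1_ne_lam2 hv')])
          (by rw [pow_one, sum_zInit_vecMul_tiltedTrans,
            aCoef_mul_add_bCoef_mul (lam1_ne_lam2 hv')]) n

/-- Probability generating function of `S n = Z 1 + ⋯ + Z n`:
`E[v^(S n)] = a(v)·λ₁(v)^n + b(v)·λ₂(v)^n`. -/
theorem markov_pgf (n : ℕ) (hn : 1 ≤ n) (v : ℝ) (hv : 0 < v) :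
    (∑ z : Fin (n + 1) → Fin 2, pathProb n z * v ^ pathSum n z) =
      aCoef v * lam1 v ^ n + bCoef v * lam2 v ^ n :=
  markov_pgf_general n v hv
end
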